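/- With V, R, and V* as in the context: if |V*| ≥ 2, then no valid utility remapping function ψ : V → R exists. -/
import Mathlib


namespace SPIs

/-- `Pareto x y` means `y` is a weak Pareto improvement on `x`, i.e. `y ⪰ x`. -/
def Pareto {n : ℕ} (x y : Fin n → ℝ) : Prop := ∀ i, x i ≤ y i

/-- `StrictPareto x y` means `y` is a strict Pareto improvement on `x`, i.e. `y ≻ x`. -/
def StrictPareto {n : ℕ} (x y : Fin n → ℝ) : Prop := Pareto x y ∧ ∃ i, x i < y i

/-- An `n`-player normal-form game whose (finite, nonempty) action sets are drawn from the
fixed countably infinite universe `ℕ`. -/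
structure Game (n : ℕ) where
  act : Fin n → Finset ℕ
  act_nonempty : ∀ i, (act i).Nonempty
  u : (Fin n → ℕ) → Fin n → ℝ

namespace Game

variable {n : ℕ}

/-- `a` is an outcome (action profile) of `G`. -/
def mem (G : Game n) (a : Fin n → ℕ) : Prop := ∀ i, a i ∈ G.act i

/-- Action `x` of Player `i` is strictly dominated (by some action `x'`) in `G`. -/
def Dominated (G : Game n) (i : Fin n) (x : ℕ) : Prop :=
  x ∈ G.act i ∧ ∃ x' ∈ G.act i, ∀ a : Fin n → ℕ, G.mem a →
    G.u (Function.update a i x) i < G.u (Function.update a i x') i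

/-- `G` contains no strictly dominated actions. -/
def FullyReduced (G : Game n) : Prop := ∀ i x, ¬ G.Dominated i x

/-- `G'` is obtained from `G` by removing a single strictly dominated action. -/
def RemoveStep (G G' : Game n) : Prop :=
  ∃ i x, G.Dominated i x ∧
    G'.act = Function.update G.act i ((G.act i).erase x) ∧ G'.u = G.u

/-- `H` is the reduced game `Ḡ` of `G`: it is obtained from `G` by iteratively removing
strictly dominated actions and itself has none left. -/
def IsReduction (G H : Game n) : Prop :=
  Relation.ReflTransGen RemoveStep G H ∧ H.FullyReduced

/-- `φ` is a game isomorphism from `G` to `G'`. -/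
def Iso (G G' : Game n) (φ : Fin n → ℕ → ℕ) : Prop :=
  (∀ i, Set.BijOn (φ i) (G.act i : Set ℕ) (G'.act i : Set ℕ)) ∧
  ∃ m b : Fin n → ℝ, (∀ i, 0 < m i) ∧
    ∀ a : Fin n → ℕ, G.mem a → ∀ i, G'.u (fun j => φ j (a j)) i = m i * G.u a i + b i

/-- The finite set of all action profiles of `G`. -/
def outcomes (G : Game n) : Finset (Fin n → ℕ) := Fintype.piFinset G.act

end Game

/-- A valid utility remapping function from the set `V` of payoff vectors into the set `R`
of payoff vectors: it maps `V` into `R`, is weakly Pareto improving on `V`, strictly Pareto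
improving somewhere on `V`, and entrywise positive affine on `V`. -/
def ValidRemap {n : ℕ} (V R : Set (Fin n → ℝ)) (ψ : (Fin n → ℝ) → Fin n → ℝ) : Prop :=
  (∀ v ∈ V, ψ v ∈ R) ∧ (∀ v ∈ V, Pareto v (ψ v)) ∧ (∃ v ∈ V, StrictPareto v (ψ v)) ∧
  (∀ i, ∃ m b : ℝ, 0 < m ∧ ∀ v ∈ V, ψ v i = m * v i + b)

/-- `V = u(Ā)`: the set of payoff vectors of the reduced game. -/
def Vset (G Gb : Game 2) : Set (Fin 2 → ℝ) := G.u '' {a | Gb.mem a}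

/-- `R = u(Δ(A))`: the convex hull of the set of payoff vectors of `G`. -/
def Rset (G : Game 2) : Set (Fin 2 → ℝ) := convexHull ℝ (G.u '' {a | G.mem a})

/-- `V*`: the set of points of `V` that cannot be strictly Pareto improved within `R`. -/
def VstarSet (G Gb : Game 2) : Set (Fin 2 → ℝ) :=
  {v ∈ Vset G Gb | ¬ ∃ r ∈ Rset G, StrictPareto v r}


lemma mem_of_removeStep {n : ℕ} {G G' : Game n} (h : Game.RemoveStep G G')
    {a : Fin n → ℕ} (ha : G'.mem a) : G.mem a := by
  obtain ⟨i, x, _, hact, _⟩ := h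
  intro j
  have hj := ha j
  rw [hact] at hj
  by_cases hij : j = i
  · subst hij
    rw [Function.update_self] at hj
    exact Finset.mem_of_mem_erase hj
  · rwa [Function.update_of_ne hij] at hj

lemma mem_of_reflTrans {n : ℕ} {G H : Game n}
    (h : Relation.ReflTransGen Game.RemoveStep G H)
    {a : Fin n → ℕ} (ha : H.mem a) : G.mem a := by
  induction h with
  | refl => exact ha
  | tail _ hstep ih => exact ih (mem_of_removeStep hstep ha)

lemma pareto_of_eq_lt {p q : Fin 2 → ℝ} {i j : Fin 2}
    (hij : ∀ k, k = i ∨ k = j) (he : p i = q i) (hl : p j < q j) :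
    StrictPareto p q := by
  refine ⟨fun k => ?_, j, hl⟩
  rcases hij k with h | h <;> subst h
  · exact le_of_eq he
  · exact le_of_lt hl

lemma eq_of_no_strict {p q : Fin 2 → ℝ} {i j : Fin 2}
    (hij : ∀ k, k = i ∨ k = j)
    (h1 : ¬ StrictPareto p q) (h2 : ¬ StrictPareto q p) (he : p i = q i) :
    p j = q j := by
  rcases lt_trichotomy (p j) (q j) with h | h | h
  · exact absurd (pareto_of_eq_lt hij he h) h1
  · exact h
  · exact absurd (pareto_of_eq_lt hij he.symm h) h2

/-- Case 3 of Theorem 4 of the paper: if `|V*| ≥ 2`, then no valid utility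
remapping function `ψ : V → R` exists. -/
theorem correlated_token_spi_case_Vstar_big (G Gb : Game 2)
    (hred : Game.IsReduction G Gb)
    (hV : (Vset G Gb).Nontrivial)
    (hstar : (VstarSet G Gb).Nontrivial) :
    ¬ ∃ ψ : (Fin 2 → ℝ) → Fin 2 → ℝ, ValidRemap (Vset G Gb) (Rset G) ψ := by
  rintro ⟨ψ, hmap, hpar, ⟨x, hxV, hxs⟩, haff⟩
  obtain ⟨v, hv, w, hw, hvw⟩ := hstar
  have hVR : Vset G Gb ⊆ Rset G := by
    rintro _ ⟨a, ha, rfl⟩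
    exact subset_convexHull ℝ _ ⟨a, mem_of_reflTrans hred.1 ha, rfl⟩
  have hnvw : ¬ StrictPareto v w := fun h => hv.2 ⟨w, hVR hw.1, h⟩
  have hnwv : ¬ StrictPareto w v := fun h => hw.2 ⟨v, hVR hv.1, h⟩
  have hall : ∀ k : Fin 2, k = 0 ∨ k = 1 := by decide
  have hall' : ∀ k : Fin 2, k = 1 ∨ k = 0 := by decide
  have hdiff : ∀ i, v i ≠ w i := by
    intro i he
    apply hvw
    funext k
    rcases hall i with rfl | rfl
    · have h1 := eq_of_no_strict hall hnvw hnwv he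
      rcases hall k with rfl | rfl <;> assumption
    · have h0 := eq_of_no_strict hall' hnvw hnwv he
      rcases hall k with rfl | rfl <;> assumption
  have hfix : ∀ z, z ∈ VstarSet G Gb → ∀ i, ψ z i = z i := by
    rintro z ⟨hzV, hz⟩ i
    have hp := hpar z hzV
    by_contra hne
    exact hz ⟨ψ z, hmap z hzV, hp, i, lt_of_le_of_ne (hp i) (Ne.symm hne)⟩
  have hid : ∀ i, ψ x i = x i := by
    intro i
    obtain ⟨m, b, hm, hmb⟩ := haff i
    have e1 : m * v i + b = v i := by rw [← hmb v hv.1]; exact hfix v hv i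
    have e2 : m * w i + b = w i := by rw [← hmb w hw.1]; exact hfix w hw i
    have hm1 : m = 1 := by
      have h : m * (v i - w i) = 1 * (v i - w i) := by ring_nf; nlinarith
      exact mul_right_cancel₀ (sub_ne_zero.2 (hdiff i)) h
    have hb : b = 0 := by rw [hm1] at e1; linarith
    rw [hmb x hxV, hm1, hb]; ring
  obtain ⟨i, hlt⟩ := hxs.2
  rw [hid i] at hlt
  exact lt_irrefl _ hlt

end SPIs
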